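/- arXiv:2311.01190 — 6 statements merged into one kernel-verified Lean document; each statement's English description precedes it below -/
import Mathlib

section
/- The thirteen six-element sets of C1 are pairwise distinct, any two of them have nonempty intersection, no point of P belongs to all thirteen of them, and the union of the thirteen sets has exactly 39 elements. -/
/-- The point set `P = (ZMod 13) × {0,1,2,a,b} ∪ {∞}`, encoded with labels
`0,1,2,a,b` as `(0 : Fin 5), 1, 2, 3, 4` respectively and `∞` as `none`. -/
abbrev Pt : Type := Option (ZMod 13 × Fin 5)

/-- The point `n_x` (a non-infinity point). -/
def pt (n : ZMod 13) (x : Fin 5) : Pt := some (n, x)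

/-- The point `∞`. -/
def infty : Pt := none

/-- The thirteen six-element subsets of `P` forming the family `C1`
(labels: `a = 3`, `b = 4`). -/
def c1 : Fin 13 → Finset Pt :=
  ![{pt 0 0, pt 3 0, pt 2 1, pt 7 1, pt 11 3, pt 4 3},
    {pt 2 0, pt 3 0, pt 7 0, pt 0 2, pt 6 4, pt 9 4},
    {pt 7 1, pt 3 1, pt 0 2, pt 2 2, pt 1 3, pt 6 3},
    {pt 0 1, pt 3 1, pt 2 1, pt 7 0, pt 12 4, pt 8 4},
    {pt 2 2, pt 3 2, pt 7 0, pt 0 0, pt 10 3, pt 12 3},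
    {pt 7 2, pt 3 2, pt 0 2, pt 2 1, pt 4 4, pt 5 4},
    {pt 0 0, pt 2 0, pt 3 1, pt 7 2, pt 9 3, pt 10 4},
    {pt 7 1, pt 0 1, pt 3 2, pt 2 0, pt 8 3, pt 11 4},
    {pt 2 2, pt 7 2, pt 3 0, pt 0 1, pt 5 3, pt 1 4},
    {infty, pt 0 0, pt 0 1, pt 0 2, pt 0 3, pt 0 4},
    {infty, pt 2 0, pt 2 1, pt 2 2, pt 2 3, pt 2 4},
    {infty, pt 3 0, pt 3 1, pt 3 2, pt 3 3, pt 3 4},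
    {infty, pt 7 0, pt 7 1, pt 7 2, pt 7 3, pt 7 4}]

/-- The thirteen six-element sets of `C1` are pairwise distinct, any two of them have
nonempty intersection, no point of `P` belongs to all thirteen of them, and the union
of the thirteen sets has exactly 39 elements. -/
theorem statement_3 :
    Function.Injective c1 ∧
    (∀ i : Fin 13, (c1 i).card = 6) ∧
    (∀ i j : Fin 13, (c1 i ∩ c1 j).Nonempty) ∧
    (¬ ∃ p : Pt, ∀ i : Fin 13, p ∈ c1 i) ∧
    ((Finset.univ : Finset (Fin 13)).biUnion c1).card = 39 := by
  decide
end

section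
/- Let Q = {∞} ∪ {(n,x) : n ∈ {0,2,3,7}, x ∈ {0,1,2}}, a 13-element subset of P. Then the thirteen sets B ∩ Q, for B ranging over C1, are pairwise distinct 4-element subsets of Q, and every 2-element subset of Q is contained in exactly one of them; that is, the restrictions of the blocks of C1 to Q form a 2-(13,4,1) design (a projective plane of order 3). -/
/-- The 13-element set `Q = {∞} ∪ {(n,x) : n ∈ {0,2,3,7}, x ∈ {0,1,2}}`. -/
def Q : Finset Pt :=
  {infty,
   pt 0 0, pt 0 1, pt 0 2,
   pt 2 0, pt 2 1, pt 2 2,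
   pt 3 0, pt 3 1, pt 3 2,
   pt 7 0, pt 7 1, pt 7 2}

/-- The thirteen sets `B ∩ Q`, for `B` ranging over `C1`, are pairwise distinct
4-element subsets of the 13-element set `Q`, and every 2-element subset of `Q` is
contained in exactly one of them; that is, the restrictions of the blocks of `C1`
to `Q` form a 2-(13,4,1) design (a projective plane of order 3). -/
theorem statement_4 :
    Q.card = 13 ∧
    Function.Injective (fun i : Fin 13 => c1 i ∩ Q) ∧
    (∀ i : Fin 13, (c1 i ∩ Q).card = 4) ∧
    (∀ x ∈ Q, ∀ y ∈ Q, x ≠ y →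
      ∃! i : Fin 13, x ∈ c1 i ∩ Q ∧ y ∈ c1 i ∩ Q) := by
  refine ⟨by decide, ?_, by decide, by unfold ExistsUnique; decide⟩
  have h : ∀ a b : Fin 13, c1 a ∩ Q = c1 b ∩ Q → a = b := by decide
  exact fun a b => h a b
end

section
/- For every e ∈ ZMod 13, the translated family C1^e = {B^e : B ∈ C1} consists of thirteen pairwise distinct six-element subsets of P, any two of which have nonempty intersection, and no point of P belongs to all thirteen of them. -/
/-- Development by `e` : add `e` (mod 13) to the `ZMod 13` coordinate of every
non-`∞` point, fixing `∞`. -/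
def dev (e : ZMod 13) : Pt → Pt
  | none => none
  | some (n, x) => some (n + e, x)

/-- For every `e ∈ ZMod 13`, the translated family `C1^e = {B^e : B ∈ C1}` consists
of thirteen pairwise distinct six-element subsets of `P`, any two of which have
nonempty intersection, and no point of `P` belongs to all thirteen of them. -/
theorem statement_5 (e : ZMod 13) :
    Function.Injective (fun i : Fin 13 => (c1 i).image (dev e)) ∧
    (∀ i : Fin 13, ((c1 i).image (dev e)).card = 6) ∧
    (∀ i j : Fin 13, ((c1 i).image (dev e) ∩ (c1 j).image (dev e)).Nonempty) ∧
    (¬ ∃ p : Pt, ∀ i : Fin 13, p ∈ (c1 i).image (dev e)) := by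
  revert e
  decide
end

section
/- Let R = {2,5,6} ⊆ ZMod 13. For any two distinct elements i, j of ZMod 13, the intersection (i + R) ∩ (j + R) has exactly one element if i − j is a square in ZMod 13, and is empty if i − j is not a square in ZMod 13. -/
/-- Let `R = {2,5,6} ⊆ ZMod 13`. For any two distinct elements `i, j` of `ZMod 13`,
the intersection `(i + R) ∩ (j + R)` has exactly one element if `i - j` is a square
in `ZMod 13`, and is empty if `i - j` is not a square in `ZMod 13`. -/
theorem statement_9 (i j : ZMod 13) (hij : i ≠ j) :
    ((∃ x : ZMod 13, i - j = x ^ 2) →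
      (({2, 5, 6} : Finset (ZMod 13)).image (i + ·) ∩
        ({2, 5, 6} : Finset (ZMod 13)).image (j + ·)).card = 1) ∧
    (¬ (∃ x : ZMod 13, i - j = x ^ 2) →
      ({2, 5, 6} : Finset (ZMod 13)).image (i + ·) ∩
        ({2, 5, 6} : Finset (ZMod 13)).image (j + ·) = ∅) := by
  revert hij; revert i j; decide
end

section
/- Let 2R = {4,10,12} ⊆ ZMod 13. For any two distinct elements i, j of ZMod 13, the intersection (i + 2R) ∩ (j + 2R) has exactly one element if i − j is not a square in ZMod 13, and is empty if i − j is a nonzero square in ZMod 13. -/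
/-- Let `2R = {4,10,12} ⊆ ZMod 13`. For any two distinct elements `i, j` of `ZMod 13`,
the intersection `(i + 2R) ∩ (j + 2R)` has exactly one element if `i - j` is not a
square in `ZMod 13`, and is empty if `i - j` is a (nonzero) square in `ZMod 13`. -/
theorem statement_10 (i j : ZMod 13) (hij : i ≠ j) :
    (¬ (∃ x : ZMod 13, i - j = x ^ 2) →
      (({4, 10, 12} : Finset (ZMod 13)).image (i + ·) ∩
        ({4, 10, 12} : Finset (ZMod 13)).image (j + ·)).card = 1) ∧
    ((∃ x : ZMod 13, i - j = x ^ 2) →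
      ({4, 10, 12} : Finset (ZMod 13)).image (i + ·) ∩
        ({4, 10, 12} : Finset (ZMod 13)).image (j + ·) = ∅) := by
  revert hij; revert i j; decide
end

section
/- For all integers r, s with 2 ≤ r < s, setting n = 2^(r+s) + 2^r − 2^s and m = 2^r, the inequality n ≤ m^3 − 2·m^2 + 2·m holds if and only if s < 2r. -/
/-- For all integers `r, s` with `2 ≤ r < s`, setting `n = 2^(r+s) + 2^r - 2^s` and
`m = 2^r`, the inequality `n ≤ m³ - 2m² + 2m` (in `ℤ`) holds if and only if `s < 2r`. -/
theorem statement_14 (r s : ℕ) (hr : 2 ≤ r) (hrs : r < s) :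
    (2 : ℤ) ^ (r + s) + 2 ^ r - 2 ^ s ≤
      ((2 : ℤ) ^ r) ^ 3 - 2 * ((2 : ℤ) ^ r) ^ 2 + 2 * (2 : ℤ) ^ r ↔
    s < 2 * r := by
  have ha : (4 : ℤ) ≤ 2 ^ r := by
    calc (4 : ℤ) = 2 ^ 2 := by norm_num
    _ ≤ 2 ^ r := pow_le_pow_right₀ (by norm_num) hr
  have hab : (2 : ℤ) ^ (r + s) = 2 ^ r * 2 ^ s := pow_add 2 r s
  constructor
  · intro h
    by_contra hsl
    push_neg at hsl
    have hb : ((2 : ℤ) ^ r) ^ 2 ≤ 2 ^ s := by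
      rw [← pow_mul]
      exact pow_le_pow_right₀ (by norm_num) (by omega)
    nlinarith [hab, hb, ha]
  · intro h
    have hb : 2 * (2 : ℤ) ^ s ≤ ((2 : ℤ) ^ r) ^ 2 := by
      rw [← pow_mul]
      calc 2 * (2 : ℤ) ^ s = 2 ^ (s + 1) := by ring
      _ ≤ 2 ^ (r * 2) := pow_le_pow_right₀ (by norm_num) (by omega)
    nlinarith [hab, hb, ha]
end
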